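/- Let Y be a Banach lattice sub-f-algebra of a Banach lattice f-algebra E that is a projection band in E. If a net (y_α) in Y is mn-convergent to 0 in Y, then it is mn-convergent to 0 in E. -/
import Mathlib


open Filter

class BanachLatticeFAlgebra (E : Type*) extends NonUnitalNormedRing E, Lattice E where
  add_le_add_left : ∀ a b : E, a ≤ b → ∀ c : E, c + a ≤ c + b
  mul_nonneg : ∀ a b : E, 0 ≤ a → 0 ≤ b → 0 ≤ a * b
  inf_mul_right : ∀ a b c : E, 0 ≤ c → a ⊓ b = 0 → (a * c) ⊓ b = 0
  inf_mul_left : ∀ a b c : E, 0 ≤ c → a ⊓ b = 0 → (c * a) ⊓ b = 0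
  archimedean : ∀ a b : E, 0 ≤ a → (∀ n : ℕ, n • a ≤ b) → a ≤ 0
  solid_norm : ∀ a b : E, a ⊔ -a ≤ b ⊔ -b → ‖a‖ ≤ ‖b‖

/-- The lattice absolute value `|x| = x ⊔ (-x)`. -/
def latAbs {E : Type*} [BanachLatticeFAlgebra E] (x : E) : E := x ⊔ -x

/-- A net `x` is multiplicative norm (mn-) convergent to `x₀` along the filter `l`
if `‖|x i - x₀| u‖ → 0` for every positive `u`. -/
def MnTendsto {E : Type*} [BanachLatticeFAlgebra E] {ι : Type*} (l : Filter ι)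
    (x : ι → E) (x₀ : E) : Prop :=
  ∀ u : E, 0 ≤ u → Tendsto (fun i => ‖latAbs (x i - x₀) * u‖) l (nhds 0)

variable {E : Type*} [BanachLatticeFAlgebra E] [CompleteSpace E]
variable {A : Type*} [Preorder A] [Nonempty A] [IsDirected A (· ≤ ·)]


instance {E : Type*} [BanachLatticeFAlgebra E] :
    CovariantClass E E (· + ·) (· ≤ ·) :=
  ⟨fun c a b h => BanachLatticeFAlgebra.add_le_add_left a b h c⟩

lemma latAbs_nonneg {E : Type*} [BanachLatticeFAlgebra E] (x : E) : 0 ≤ latAbs x := by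
  have : latAbs x = |x| := rfl
  rw [this]
  exact abs_nonneg x

lemma mul_eq_zero_of_inf_eq_zero {E : Type*} [BanachLatticeFAlgebra E] {x z : E}
    (hx : 0 ≤ x) (hz : 0 ≤ z) (hxz : x ⊓ z = 0) : x * z = 0 := by
  have h1 : (x * z) ⊓ x = 0 :=
    BanachLatticeFAlgebra.inf_mul_left z x x hx (by rwa [inf_comm] at hxz)
  have h2 : (x * z) ⊓ (x * z) = 0 :=
    BanachLatticeFAlgebra.inf_mul_right x (x * z) z hz (by rwa [inf_comm] at h1)
  rwa [inf_idem] at h2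

/-- mn-convergence passes from a Banach lattice sub-`f`-algebra that is a
projection band to the whole space. -/
theorem mnTendsto_of_projectionBand (Y : Set E)
    (hadd : ∀ a ∈ Y, ∀ b ∈ Y, a + b ∈ Y) (hmul : ∀ a ∈ Y, ∀ b ∈ Y, a * b ∈ Y)
    (hsup : ∀ a ∈ Y, ∀ b ∈ Y, a ⊔ b ∈ Y) (hneg : ∀ a ∈ Y, -a ∈ Y)
    (hband : ∀ u : E, 0 ≤ u → ∃ u₁ u₂ : E, u₁ ∈ Y ∧ 0 ≤ u₁ ∧ 0 ≤ u₂ ∧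
      u = u₁ + u₂ ∧ ∀ a ∈ Y, latAbs a ⊓ u₂ = 0)
    (y : A → E) (hy : ∀ a, y a ∈ Y)
    (h : ∀ u ∈ Y, 0 ≤ u → Tendsto (fun a => ‖latAbs (y a) * u‖) atTop (nhds 0)) :
    MnTendsto atTop y 0 := by
  intro u hu
  obtain ⟨u₁, u₂, hY1, hpos1, hpos2, hsum, hperp⟩ := hband u hu
  have key : ∀ a, latAbs (y a) * u₂ = 0 := fun a =>
    mul_eq_zero_of_inf_eq_zero (latAbs_nonneg _) hpos2 (hperp (y a) (hy a))
  have heq : (fun a => ‖latAbs (y a - 0) * u‖) = fun a => ‖latAbs (y a) * u₁‖ := by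
    funext a
    rw [sub_zero, hsum, mul_add, key, add_zero]
  rw [heq]
  exact h u₁ hY1 hpos1
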